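/- arXiv:2408.13793 — 4 statements merged into one kernel-verified Lean document; each statement's English description precedes it below -/
import Mathlib

section
/- Let ε_∞ > 0, ω_p > 0, ω_0 > 0, γ ≥ 0 be real parameters, let λ ∈ (0,1) and let e₀ > 0 be real. Set β := e₀(1−λ) + λ ε_∞ and c := ω_p² λ ε_∞ / β. Then for every real ω > 0 with (ω_0² − ω²)² + γ² ω² > 0, one has Re(ε_p(ω)) = e₀ (λ−1)/λ if and only if (ω²)² − (2ω_0² + c − γ²) ω² + (ω_0⁴ + c ω_0²) = 0. -/
/-- The Lorentz permittivity model
`ε_p(ω) = ε_∞ (1 + ω_p² / (ω_0² − ω² − i γ ω))`. -/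
noncomputable def epsP (εinf ωp ω0 γ ω : ℝ) : ℂ :=
  (εinf : ℂ) * (1 + (ωp : ℂ) ^ 2 /
    ((ω0 : ℂ) ^ 2 - (ω : ℂ) ^ 2 - Complex.I * (γ : ℂ) * (ω : ℂ)))

/-- The plasmonic dispersion condition `Re(ε_p(ω)) = e₀ (λ−1)/λ` is equivalent to a
quadratic equation in `ω²`. -/
theorem stmt0 (εinf ωp ω0 γ lam e0 β c : ℝ)
    (hεinf : 0 < εinf) (hωp : 0 < ωp) (hω0 : 0 < ω0) (hγ : 0 ≤ γ)
    (hlam0 : 0 < lam) (hlam1 : lam < 1) (he0 : 0 < e0)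
    (hβ : β = e0 * (1 - lam) + lam * εinf)
    (hc : c = ωp ^ 2 * lam * εinf / β) :
    ∀ ω : ℝ, 0 < ω → 0 < (ω0 ^ 2 - ω ^ 2) ^ 2 + γ ^ 2 * ω ^ 2 →
      ((epsP εinf ωp ω0 γ ω).re = e0 * (lam - 1) / lam ↔
        (ω ^ 2) ^ 2 - (2 * ω0 ^ 2 + c - γ ^ 2) * ω ^ 2 + (ω0 ^ 4 + c * ω0 ^ 2) = 0) := by
  intro ω hω hΔpos
  set Δ : ℝ := (ω0 ^ 2 - ω ^ 2) ^ 2 + γ ^ 2 * ω ^ 2 with hΔdef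
  have hΔne : Δ ≠ 0 := ne_of_gt hΔpos
  have hβpos : 0 < β := by rw [hβ]; nlinarith
  have hβne : β ≠ 0 := ne_of_gt hβpos
  have hlamne : lam ≠ 0 := ne_of_gt hlam0
  have hre : (epsP εinf ωp ω0 γ ω).re
      = εinf + εinf * ωp ^ 2 * (ω0 ^ 2 - ω ^ 2) / Δ := by
    have hD : ((ω0 : ℂ) ^ 2 - (ω : ℂ) ^ 2 - Complex.I * (γ : ℂ) * (ω : ℂ))
        = Complex.ofReal (ω0 ^ 2 - ω ^ 2) + Complex.ofReal (-(γ * ω)) * Complex.I := by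
      push_cast; ring
    have hωp2 : ((ωp : ℂ)) ^ 2 = Complex.ofReal (ωp ^ 2) := by push_cast; ring
    rw [epsP, hD, hωp2]
    simp only [Complex.mul_re, Complex.add_re, Complex.add_im, Complex.one_re, Complex.one_im,
      Complex.div_re, Complex.div_im, Complex.ofReal_re, Complex.ofReal_im, Complex.normSq_apply,
      Complex.mul_im, Complex.I_re, Complex.I_im]
    have hns : (ω0 ^ 2 - ω ^ 2 + (-(γ * ω) * 0 - 0 * 1)) * (ω0 ^ 2 - ω ^ 2 + (-(γ * ω) * 0 - 0 * 1)) +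
        (0 + (-(γ * ω) * 1 + 0 * 0)) * (0 + (-(γ * ω) * 1 + 0 * 0)) = Δ := by
      rw [hΔdef]; ring
    rw [hns]
    field_simp
    ring
  rw [hre]
  have hcβ : c * β = ωp ^ 2 * lam * εinf := by rw [hc]; field_simp
  have hexp : εinf + εinf * ωp ^ 2 * (ω0 ^ 2 - ω ^ 2) / Δ
      = (εinf * Δ + εinf * ωp ^ 2 * (ω0 ^ 2 - ω ^ 2)) / Δ := by
    field_simp
  rw [hexp, div_eq_div_iff hΔne hlamne]
  have hq : β * ((ω ^ 2) ^ 2 - (2 * ω0 ^ 2 + c - γ ^ 2) * ω ^ 2 + (ω0 ^ 4 + c * ω0 ^ 2))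
      = Δ * β + lam * εinf * (ωp ^ 2 * (ω0 ^ 2 - ω ^ 2)) := by
    rw [hΔdef]; linear_combination (ω0 ^ 2 - ω ^ 2) * hcβ
  constructor
  · intro h
    have h2 : Δ * β + lam * εinf * (ωp ^ 2 * (ω0 ^ 2 - ω ^ 2)) = 0 := by
      rw [hβ]; linear_combination h
    have := hq.trans h2
    exact (mul_eq_zero.mp this).resolve_left hβne
  · intro h
    have h2 : Δ * β + lam * εinf * (ωp ^ 2 * (ω0 ^ 2 - ω ^ 2)) = 0 := by
      rw [← hq, h, mul_zero]
    rw [hβ] at h2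
    linear_combination h2
end

section
/- Let ε_∞ > 0, ω_p > 0, ω_0 > 0, γ ≥ 0 be real parameters, let λ ∈ (0,1) and let e₀ > 0 be real. Set β := e₀(1−λ) + λ ε_∞, c := ω_p² λ ε_∞ / β and Δ := c² − γ² (4ω_0² − γ² + 2c). Assume Δ ≥ 0, and define ω_P² := (1/2)(2ω_0² − γ² + c + √Δ). If ω_P² > 0 and (ω_0² − ω_P²)² + γ² ω_P² > 0, then ω_P := √(ω_P²) satisfies the dispersion relation Re(ε_p(ω_P)) = e₀ (λ−1)/λ; equivalently, e₀ − λ (e₀ − Re(ε_p(ω_P))) = 0. -/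
/-- The plasmonic resonance `ω_P := √((1/2)(2ω_0² − γ² + c + √Δ))` satisfies the dispersion
relation `Re(ε_p(ω_P)) = e₀ (λ−1)/λ`, equivalently `e₀ − λ(e₀ − Re(ε_p(ω_P))) = 0`. -/
theorem stmt1 (εinf ωp ω0 γ lam e0 β c Δ ωP2 : ℝ)
    (hεinf : 0 < εinf) (hωp : 0 < ωp) (hω0 : 0 < ω0) (hγ : 0 ≤ γ)
    (hlam0 : 0 < lam) (hlam1 : lam < 1) (he0 : 0 < e0)
    (hβ : β = e0 * (1 - lam) + lam * εinf)
    (hc : c = ωp ^ 2 * lam * εinf / β)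
    (hΔ : Δ = c ^ 2 - γ ^ 2 * (4 * ω0 ^ 2 - γ ^ 2 + 2 * c))
    (hΔ0 : 0 ≤ Δ)
    (hωP2 : ωP2 = (1 / 2) * (2 * ω0 ^ 2 - γ ^ 2 + c + Real.sqrt Δ))
    (hpos : 0 < ωP2)
    (hden : 0 < (ω0 ^ 2 - ωP2) ^ 2 + γ ^ 2 * ωP2) :
    (epsP εinf ωp ω0 γ (Real.sqrt ωP2)).re = e0 * (lam - 1) / lam ∧
      e0 - lam * (e0 - (epsP εinf ωp ω0 γ (Real.sqrt ωP2)).re) = 0 := by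
  have hs : Real.sqrt ωP2 ^ 2 = ωP2 := Real.sq_sqrt hpos.le
  have hsd : Real.sqrt Δ ^ 2 = Δ := Real.sq_sqrt hΔ0
  have hβpos : 0 < β := by rw [hβ]; nlinarith
  have hcβ : c * (e0 * (1 - lam) + lam * εinf) = ωp ^ 2 * lam * εinf := by
    rw [hc, ← hβ]; field_simp
  have h2 : 2 * ωP2 - (2 * ω0 ^ 2 - γ ^ 2 + c) = Real.sqrt Δ := by
    rw [hωP2]; ring
  have h3 : (2 * ωP2 - (2 * ω0 ^ 2 - γ ^ 2 + c)) ^ 2 = Δ := by rw [h2, hsd]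
  have hE : (ω0 ^ 2 - ωP2) ^ 2 + γ ^ 2 * ωP2 + c * (ω0 ^ 2 - ωP2) = 0 := by
    linear_combination h3 / 4 + hΔ / 4
  set ω := Real.sqrt ωP2
  have hre : (epsP εinf ωp ω0 γ ω).re
      = εinf * (1 + ωp ^ 2 * (ω0 ^ 2 - ωP2) / ((ω0 ^ 2 - ωP2) ^ 2 + γ ^ 2 * ωP2)) := by
    have hω2 : (ω : ℝ) * ω = ωP2 := by rw [← sq]; exact hs
    simp [epsP, Complex.div_re, Complex.normSq_apply, Complex.add_re, Complex.add_im,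
      Complex.sub_re, Complex.sub_im, Complex.mul_re, Complex.mul_im, Complex.ofReal_re,
      Complex.ofReal_im, Complex.I_re, Complex.I_im, ← Complex.ofReal_pow, hs, hω2]
    left
    rw [show γ * ω * (γ * ω) = γ ^ 2 * ω ^ 2 from by ring, hs]
    ring
  have h1 : (epsP εinf ωp ω0 γ ω).re = e0 * (lam - 1) / lam := by
    rw [hre]
    have hd : (ω0 ^ 2 - ωP2) ^ 2 + γ ^ 2 * ωP2 ≠ 0 := ne_of_gt hden
    rw [eq_div_iff hlam0.ne', one_add_div hd, mul_div_assoc', div_mul_eq_mul_div, div_eq_iff hd]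
    linear_combination (-(ω0 ^ 2 - ωP2)) * hcβ + (e0 * (1 - lam) + lam * εinf) * hE
  refine ⟨h1, ?_⟩
  rw [h1]; field_simp; ring
end

section
/- Let ε_∞ > 0, ω_p > 0, ω_0 > 0 be real, let λ ∈ (0,1), let e₀ > 0 be real, and assume γ = 0, so that ε_p(ω) = ε_∞ (1 + ω_p²/(ω_0² − ω²)) is real for ω ≠ ω_0. Then ω_P := √(ω_0² + λ ε_∞ ω_p² / (e₀(1−λ) + λ ε_∞)) is the unique ω > ω_0 satisfying ε_p(ω) = e₀ (λ−1)/λ, and moreover ω_P lies in the frequency band I := (ω_0, √(ω_0² + ω_p²/λ)). -/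
/-- In the undamped case `γ = 0`, the permittivity `ε_p(ω) = ε_∞(1 + ω_p²/(ω_0² − ω²))` is
real for `ω ≠ ω_0`, and `ω_P := √(ω_0² + λ ε_∞ ω_p² / (e₀(1−λ) + λ ε_∞))` is the unique
`ω > ω_0` satisfying `ε_p(ω) = e₀ (λ−1)/λ`; moreover `ω_P` lies in the frequency band
`I := (ω_0, √(ω_0² + ω_p²/λ))`. -/
theorem stmt2 (εinf ωp ω0 lam e0 : ℝ)
    (hεinf : 0 < εinf) (hωp : 0 < ωp) (hω0 : 0 < ω0)
    (hlam0 : 0 < lam) (hlam1 : lam < 1) (he0 : 0 < e0) :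
    (∀ ω : ℝ, ω ≠ ω0 →
        epsP εinf ωp ω0 0 ω = ((εinf * (1 + ωp ^ 2 / (ω0 ^ 2 - ω ^ 2)) : ℝ) : ℂ)) ∧
    (ω0 < Real.sqrt (ω0 ^ 2 + lam * εinf * ωp ^ 2 / (e0 * (1 - lam) + lam * εinf)) ∧
      epsP εinf ωp ω0 0
          (Real.sqrt (ω0 ^ 2 + lam * εinf * ωp ^ 2 / (e0 * (1 - lam) + lam * εinf)))
        = ((e0 * (lam - 1) / lam : ℝ) : ℂ)) ∧
    (∀ ω : ℝ, ω0 < ω → epsP εinf ωp ω0 0 ω = ((e0 * (lam - 1) / lam : ℝ) : ℂ) →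
      ω = Real.sqrt (ω0 ^ 2 + lam * εinf * ωp ^ 2 / (e0 * (1 - lam) + lam * εinf))) ∧
    Real.sqrt (ω0 ^ 2 + lam * εinf * ωp ^ 2 / (e0 * (1 - lam) + lam * εinf))
      < Real.sqrt (ω0 ^ 2 + ωp ^ 2 / lam) := by
  have hD : 0 < e0 * (1 - lam) + lam * εinf := by nlinarith
  set A : ℝ := lam * εinf * ωp ^ 2 / (e0 * (1 - lam) + lam * εinf) with hAdef
  have hA : 0 < A := by positivity
  have hreal : ∀ ω : ℝ, epsP εinf ωp ω0 0 ω
      = ((εinf * (1 + ωp ^ 2 / (ω0 ^ 2 - ω ^ 2)) : ℝ) : ℂ) := by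
    intro ω
    simp only [epsP]
    push_cast
    ring_nf
  have hs2 : Real.sqrt (ω0 ^ 2 + A) ^ 2 = ω0 ^ 2 + A :=
    Real.sq_sqrt (by positivity)
  have hlt : ω0 < Real.sqrt (ω0 ^ 2 + A) :=
    (Real.lt_sqrt (by positivity)).2 (by linarith)
  refine ⟨fun ω _ => hreal ω, ⟨hlt, ?_⟩, ?_, ?_⟩
  · rw [hreal]
    norm_cast
    rw [hs2]
    have h1 : ω0 ^ 2 - (ω0 ^ 2 + A) = -A := by ring
    rw [h1]
    field_simp [hAdef]
    have hAD : A * (e0 * (1 - lam) + lam * εinf) = lam * εinf * ωp ^ 2 := by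
      rw [hAdef]; exact div_mul_cancel₀ _ hD.ne'
    linear_combination hAD
  · intro ω hω heq
    rw [hreal ω] at heq
    have heqr : εinf * (1 + ωp ^ 2 / (ω0 ^ 2 - ω ^ 2)) = e0 * (lam - 1) / lam := by
      exact_mod_cast heq
    have hne : ω0 ^ 2 - ω ^ 2 ≠ 0 := by nlinarith
    have hω2 : ω ^ 2 = ω0 ^ 2 + A := by
      rw [hAdef]
      field_simp at heqr
      have hu : (ω ^ 2 - ω0 ^ 2) * (e0 * (1 - lam) + lam * εinf) = lam * εinf * ωp ^ 2 := by
        linear_combination -heqr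
      rw [← hu, mul_div_cancel_right₀ _ hD.ne']
      ring
    rw [← hω2, Real.sqrt_sq (by linarith)]
  · apply Real.sqrt_lt_sqrt (by positivity)
    have : A < ωp ^ 2 / lam := by
      rw [hAdef, div_lt_div_iff₀ hD hlam0]
      nlinarith [mul_pos (pow_pos hωp 2) (mul_pos he0 (sub_pos.2 hlam1)),
        mul_pos (pow_pos hωp 2) (mul_pos (mul_pos hlam0 hεinf) (sub_pos.2 hlam1))]
    linarith
end

section
/- Let ε_∞ > 0, ω_p > 0, ω_0 ≥ 0 be real, λ ∈ (0,1), ε₀ ∈ ℂ, and Λ(ω) := ε₀ − λ(ε₀ − ε_p(ω)) with D(ω) := ω_0² − ω² − i γ ω. Fix δ > 0, Ω_max > 0, constants C₁, C₂, C₃ ≥ 0, h > 0 and a ∈ (0,1]. Suppose: (i) ω_P ∈ (0, Ω_max] satisfies Re(Λ(ω_P)) = 0; (ii) ω ∈ (0, Ω_max]; (iii) |D(ω)| ≥ δ and |D(ω_P)| ≥ δ; (iv) |Im(ε₀)| ≤ C₁ a^h; (v) 0 ≤ γ ≤ C₂ a^h; (vi) |ω² − ω_P²| ≤ C₃ a^h.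 Then |Λ(ω)| ≤ [ (1−λ) C₁ + λ ε_∞ ω_p² (C₃ + 3 Ω_max C₂) / δ² ] · a^h; that is, for incident frequencies with ω² = ω_P² ± O(a^h) and damping γ = O(a^h), the dispersion function satisfies Λ(ω) = O(a^h). -/
/-- The denominator `D(ω) := ω_0² − ω² − i γ ω` of the Lorentz model. -/
noncomputable def lorentzD (ω0 γ ω : ℝ) : ℂ :=
  (ω0 : ℂ) ^ 2 - (ω : ℂ) ^ 2 - Complex.I * (γ : ℂ) * (ω : ℂ)

/-- The dispersion function `Λ(ω) := ε₀ − λ(ε₀ − ε_p(ω))`. -/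
noncomputable def dispΛ (εinf ωp ω0 γ lam : ℝ) (ε0 : ℂ) (ω : ℝ) : ℂ :=
  ε0 - (lam : ℂ) * (ε0 - epsP εinf ωp ω0 γ ω)

/-!
With `K = λ ε_∞ ω_p²` one has `Λ(ω) = (1 - λ) ε₀ + λ ε_∞ + K / D(ω)`. At the quasi-root `ω_P`
the real part vanishes, so `|Λ(ω_P)| = |Im Λ(ω_P)| = |(1 - λ) Im ε₀ + K γ ω_P / |D(ω_P)|²|`,
which is small because `Im ε₀` and `γ` are. Moreover
`Λ(ω) - Λ(ω_P) = K (D(ω_P) - D(ω)) / (D(ω) D(ω_P))`, where the numerator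
`ω² - ω_P² + i γ (ω - ω_P)` is small and the denominator has modulus at least `δ²`.
-/

open Complex

section Lorentz

variable {εinf ωp ω0 γ lam : ℝ} {ε0 : ℂ} {δ ω ω' : ℝ}

@[simp] lemma lorentzD_re : (lorentzD ω0 γ ω).re = ω0 ^ 2 - ω ^ 2 := by
  simp [lorentzD, sq]

@[simp] lemma lorentzD_im : (lorentzD ω0 γ ω).im = -(γ * ω) := by
  simp [lorentzD, sq]

lemma norm_lorentzD_sub_le :
    ‖lorentzD ω0 γ ω' - lorentzD ω0 γ ω‖ ≤ |ω ^ 2 - ω' ^ 2| + |γ| * |ω - ω'| := by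
  refine (norm_le_abs_re_add_abs_im _).trans_eq ?_
  rw [sub_re, sub_im, lorentzD_re, lorentzD_re, lorentzD_im, lorentzD_im, ← abs_mul]
  congr 2 <;> ring

lemma lorentzD_ne_zero_of_le_norm (hδ : 0 < δ) (hD : δ ≤ ‖lorentzD ω0 γ ω‖) :
    lorentzD ω0 γ ω ≠ 0 :=
  norm_pos_iff.1 (hδ.trans_le hD)

lemma dispΛ_eq (ω : ℝ) : dispΛ εinf ωp ω0 γ lam ε0 ω
    = (1 - lam) * ε0 + lam * εinf + (lam * εinf * ωp ^ 2 : ℝ) / lorentzD ω0 γ ω := by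
  simp only [dispΛ, epsP, lorentzD]
  push_cast
  ring

lemma dispΛ_im (ω : ℝ) : (dispΛ εinf ωp ω0 γ lam ε0 ω).im
    = (1 - lam) * ε0.im + lam * εinf * ωp ^ 2 * (γ * ω) / normSq (lorentzD ω0 γ ω) := by
  rw [dispΛ_eq, div_eq_mul_inv, add_im, im_ofReal_mul, inv_im, lorentzD_im]
  simp
  ring

lemma dispΛ_sub_dispΛ (hD : lorentzD ω0 γ ω ≠ 0) (hD' : lorentzD ω0 γ ω' ≠ 0) :
    dispΛ εinf ωp ω0 γ lam ε0 ω - dispΛ εinf ωp ω0 γ lam ε0 ω'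
      = (lam * εinf * ωp ^ 2 : ℝ) * (lorentzD ω0 γ ω' - lorentzD ω0 γ ω)
        / (lorentzD ω0 γ ω * lorentzD ω0 γ ω') := by
  rw [dispΛ_eq, dispΛ_eq]
  field_simp
  ring

lemma norm_dispΛ_le_of_re_eq_zero (hlam0 : 0 ≤ lam) (hlam1 : lam ≤ 1) (hεinf : 0 ≤ εinf)
    (hγ : 0 ≤ γ) (hω : 0 ≤ ω) (hδ : 0 < δ) (hD : δ ≤ ‖lorentzD ω0 γ ω‖)
    (hRe : (dispΛ εinf ωp ω0 γ lam ε0 ω).re = 0) :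
    ‖dispΛ εinf ωp ω0 γ lam ε0 ω‖
      ≤ (1 - lam) * |ε0.im| + lam * εinf * ωp ^ 2 * (γ * ω) / δ ^ 2 := by
  rw [← abs_im_eq_norm.2 hRe, dispΛ_im]
  refine (abs_add_le _ _).trans (add_le_add ?_ ?_)
  · rw [abs_mul, abs_of_nonneg (sub_nonneg.2 hlam1)]
  · rw [← Complex.sq_norm, abs_of_nonneg (by positivity)]
    gcongr

lemma norm_dispΛ_sub_le (hlam0 : 0 ≤ lam) (hεinf : 0 ≤ εinf) (hδ : 0 < δ)
    (hD : δ ≤ ‖lorentzD ω0 γ ω‖) (hD' : δ ≤ ‖lorentzD ω0 γ ω'‖) :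
    ‖dispΛ εinf ωp ω0 γ lam ε0 ω - dispΛ εinf ωp ω0 γ lam ε0 ω'‖
      ≤ lam * εinf * ωp ^ 2 * ‖lorentzD ω0 γ ω' - lorentzD ω0 γ ω‖ / δ ^ 2 := by
  rw [dispΛ_sub_dispΛ (lorentzD_ne_zero_of_le_norm hδ hD) (lorentzD_ne_zero_of_le_norm hδ hD'),
    norm_div, norm_mul, norm_mul, norm_real, Real.norm_of_nonneg (by positivity), sq δ]
  gcongr

theorem norm_dispΛ_le {Ω e₁ e₂ e₃ : ℝ} (hlam0 : 0 ≤ lam) (hlam1 : lam ≤ 1) (hεinf : 0 ≤ εinf)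
    (hδ : 0 < δ) (hω' : 0 ≤ ω') (hω'Ω : ω' ≤ Ω) (hRe : (dispΛ εinf ωp ω0 γ lam ε0 ω').re = 0)
    (hω : 0 ≤ ω) (hωΩ : ω ≤ Ω) (hD : δ ≤ ‖lorentzD ω0 γ ω‖) (hD' : δ ≤ ‖lorentzD ω0 γ ω'‖)
    (hIm : |ε0.im| ≤ e₁) (hγ0 : 0 ≤ γ) (hγ : γ ≤ e₂) (hdiff : |ω ^ 2 - ω' ^ 2| ≤ e₃) :
    ‖dispΛ εinf ωp ω0 γ lam ε0 ω‖
      ≤ (1 - lam) * e₁ + lam * εinf * ωp ^ 2 * (e₃ + 2 * Ω * e₂) / δ ^ 2 := by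
  have he₂ : 0 ≤ e₂ := hγ0.trans hγ
  have hγω' : γ * ω' ≤ Ω * e₂ := (mul_le_mul hγ hω'Ω hω' he₂).trans_eq (mul_comm _ _)
  have hDsub : ‖lorentzD ω0 γ ω' - lorentzD ω0 γ ω‖ ≤ e₃ + Ω * e₂ := by
    have hωω' : |ω - ω'| ≤ Ω := abs_sub_le_of_nonneg_of_le hω hωΩ hω' hω'Ω
    refine norm_lorentzD_sub_le.trans ?_
    rw [abs_of_nonneg hγ0]
    exact add_le_add hdiff ((mul_le_mul hγ hωω' (abs_nonneg _) he₂).trans_eq (mul_comm _ _))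
  calc ‖dispΛ εinf ωp ω0 γ lam ε0 ω‖
      ≤ ‖dispΛ εinf ωp ω0 γ lam ε0 ω'‖
        + ‖dispΛ εinf ωp ω0 γ lam ε0 ω - dispΛ εinf ωp ω0 γ lam ε0 ω'‖ := norm_le_insert' _ _
    _ ≤ ((1 - lam) * |ε0.im| + lam * εinf * ωp ^ 2 * (γ * ω') / δ ^ 2)
        + lam * εinf * ωp ^ 2 * ‖lorentzD ω0 γ ω' - lorentzD ω0 γ ω‖ / δ ^ 2 :=
      add_le_add (norm_dispΛ_le_of_re_eq_zero hlam0 hlam1 hεinf hγ0 hω' hδ hD' hRe)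
        (norm_dispΛ_sub_le hlam0 hεinf hδ hD hD')
    _ ≤ ((1 - lam) * e₁ + lam * εinf * ωp ^ 2 * (Ω * e₂) / δ ^ 2)
        + lam * εinf * ωp ^ 2 * (e₃ + Ω * e₂) / δ ^ 2 := by
      gcongr
    _ = (1 - lam) * e₁ + lam * εinf * ωp ^ 2 * (e₃ + 2 * Ω * e₂) / δ ^ 2 := by ring

end Lorentz

theorem stmt7_general (εinf ωp ω0 γ lam : ℝ) (ε0 : ℂ) (δ Ωmax C1 C2 C3 h a ωP ω : ℝ)
    (hεinf : 0 < εinf)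
    (hlam0 : 0 < lam) (hlam1 : lam < 1)
    (hδ : 0 < δ) (hΩ : 0 < Ωmax)
    (hC2 : 0 ≤ C2)
    (ha0 : 0 < a)
    (hωP0 : 0 < ωP) (hωPle : ωP ≤ Ωmax)
    (hRe : (dispΛ εinf ωp ω0 γ lam ε0 ωP).re = 0)
    (hω0' : 0 < ω) (hωle : ω ≤ Ωmax)
    (hDω : δ ≤ ‖lorentzD ω0 γ ω‖)
    (hDωP : δ ≤ ‖lorentzD ω0 γ ωP‖)
    (hIm : |ε0.im| ≤ C1 * a ^ h)
    (hγ0 : 0 ≤ γ) (hγ : γ ≤ C2 * a ^ h)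
    (hdiff : |ω ^ 2 - ωP ^ 2| ≤ C3 * a ^ h) :
    ‖dispΛ εinf ωp ω0 γ lam ε0 ω‖
      ≤ ((1 - lam) * C1 + lam * εinf * ωp ^ 2 * (C3 + 3 * Ωmax * C2) / δ ^ 2) * a ^ h := by
  refine (norm_dispΛ_le hlam0.le hlam1.le hεinf.le hδ hωP0.le hωPle hRe hω0'.le hωle hDω hDωP
    hIm hγ0 hγ hdiff).trans ?_
  have hslack : 0 ≤ lam * εinf * ωp ^ 2 * (Ωmax * (C2 * a ^ h)) / δ ^ 2 := by positivity
  linarith [show ((1 - lam) * C1 + lam * εinf * ωp ^ 2 * (C3 + 3 * Ωmax * C2) / δ ^ 2) * a ^ h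
    = (1 - lam) * (C1 * a ^ h)
      + lam * εinf * ωp ^ 2 * (C3 * a ^ h + 2 * Ωmax * (C2 * a ^ h)) / δ ^ 2
      + lam * εinf * ωp ^ 2 * (Ωmax * (C2 * a ^ h)) / δ ^ 2 by ring]

/-- For incident frequencies with `ω² = ω_P² ± O(a^h)`, damping `γ = O(a^h)` and
`|Im ε₀| = O(a^h)`, the dispersion function satisfies `Λ(ω) = O(a^h)`, with the explicit
constant `(1−λ)C₁ + λ ε_∞ ω_p² (C₃ + 3 Ω_max C₂)/δ²`. -/
theorem stmt7 (εinf ωp ω0 γ lam : ℝ) (ε0 : ℂ) (δ Ωmax C1 C2 C3 h a ωP ω : ℝ)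
    (hεinf : 0 < εinf) (hωp : 0 < ωp) (hω0 : 0 ≤ ω0)
    (hlam0 : 0 < lam) (hlam1 : lam < 1)
    (hδ : 0 < δ) (hΩ : 0 < Ωmax)
    (hC1 : 0 ≤ C1) (hC2 : 0 ≤ C2) (hC3 : 0 ≤ C3)
    (hh : 0 < h) (ha0 : 0 < a) (ha1 : a ≤ 1)
    (hωP0 : 0 < ωP) (hωPle : ωP ≤ Ωmax)
    (hRe : (dispΛ εinf ωp ω0 γ lam ε0 ωP).re = 0)
    (hω0' : 0 < ω) (hωle : ω ≤ Ωmax)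
    (hDω : δ ≤ ‖lorentzD ω0 γ ω‖)
    (hDωP : δ ≤ ‖lorentzD ω0 γ ωP‖)
    (hIm : |ε0.im| ≤ C1 * a ^ h)
    (hγ0 : 0 ≤ γ) (hγ : γ ≤ C2 * a ^ h)
    (hdiff : |ω ^ 2 - ωP ^ 2| ≤ C3 * a ^ h) :
    ‖dispΛ εinf ωp ω0 γ lam ε0 ω‖
      ≤ ((1 - lam) * C1 + lam * εinf * ωp ^ 2 * (C3 + 3 * Ωmax * C2) / δ ^ 2) * a ^ h :=
  stmt7_general εinf ωp ω0 γ lam ε0 δ Ωmax C1 C2 C3 h a ωP ω hεinf hlam0 hlam1 hδ hΩ hC2 ha0 hωP0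
    hωPle hRe hω0' hωle hDω hDωP hIm hγ0 hγ hdiff
end
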